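/- Let {f_j} be an X_d*-K-frame for X* with bounds A, B, and {g_j} ⊆ X a sequence such that for all finite sequences {c_j}: ‖Σ c_j(g_j − f_j)‖ ≤ α‖Σ c_j f_j‖ + β‖Σ c_j g_j‖ + γ‖{c_j}‖_{X_d}, where max{β, α + γA⁻¹‖K†‖‖Φ‖} < 1. Then Σ_j c_j g_j converges for every {c_j} ∈ X_d and {g_j} is an X_d*-Bessel sequence for X* with bound ((1+α)B + γ)/(1−β). -/

import Mathlib

open scoped ComplexConjugate
open Filter Topology

/-- A compatible semi-inner product on a complex normed space. -/
structure CompatSIP (X : Type*) [NormedAddCommGroup X] [NormedSpace ℂ X] where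
  sip : X → X → ℂ
  add_left : ∀ f g h : X, sip (f + g) h = sip f h + sip g h
  smul_left : ∀ (a : ℂ) (f g : X), sip (a • f) g = a * sip f g
  smul_right : ∀ (a : ℂ) (f g : X), sip f (a • g) = conj a * sip f g
  compat : ∀ f : X, sip f f = (‖f‖ : ℂ) ^ 2
  cauchy_schwarz : ∀ f g : X, ‖sip f g‖ ≤ ‖f‖ * ‖g‖

/-- The dual element `f*` of `f`, i.e. the bounded functional `g ↦ [g, f]`. -/
noncomputable def CompatSIP.dual {X : Type*} [NormedAddCommGroup X] [NormedSpace ℂ X]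
    (S : CompatSIP X) (f : X) : StrongDual ℂ X :=
  LinearMap.mkContinuous
    { toFun := fun g => S.sip g f
      map_add' := fun g h => S.add_left g h f
      map_smul' := fun a g => S.smul_left a g f }
    ‖f‖ (fun g => by
      calc ‖S.sip g f‖ ≤ ‖g‖ * ‖f‖ := S.cauchy_schwarz g f
        _ = ‖f‖ * ‖g‖ := mul_comm _ _)

/-- The Banach-space adjoint `T* : Y* → X*` of a bounded operator `T : X → Y`. -/
noncomputable def opDual {X Y : Type*} [NormedAddCommGroup X] [NormedSpace ℂ X]
    [NormedAddCommGroup Y] [NormedSpace ℂ Y] (T : X →L[ℂ] Y) :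
    StrongDual ℂ Y →L[ℂ] StrongDual ℂ X :=
  LinearMap.mkContinuous
    { toFun := fun φ => φ.comp T
      map_add' := fun φ ψ => ContinuousLinearMap.add_comp φ ψ T
      map_smul' := fun a φ => ContinuousLinearMap.smul_comp a φ T }
    ‖T‖ (fun φ => by
      calc ‖φ.comp T‖ ≤ ‖φ‖ * ‖T‖ := ContinuousLinearMap.opNorm_comp_le φ T
        _ = ‖T‖ * ‖φ‖ := mul_comm _ _)

@[simp] lemma opDual_apply {X Y : Type*} [NormedAddCommGroup X] [NormedSpace ℂ X]
    [NormedAddCommGroup Y] [NormedSpace ℂ Y] (T : X →L[ℂ] Y)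
    (φ : StrongDual ℂ Y) (x : X) : opDual T φ x = φ (T x) := rfl

/-- Convergence of the series `∑ v j` (in the Schauder/ordered sense) to `s`. -/
def SumsTo {X : Type*} [NormedAddCommGroup X] (v : ℕ → X) (s : X) : Prop :=
  Tendsto (fun n => ∑ j ∈ Finset.range n, v j) atTop (𝓝 s)

/-!
The finite-sum perturbation condition together with `‖U‖ ≤ B` gives
`‖∑ c_j g_j‖ ≤ D ‖∑ c_j e_j‖` with `D = ((1+α)B + γ)/(1-β)`, for every finite family of
coefficients. Comparing partial sums, the `g`-series is Cauchy whenever the `e`-series is, so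
`c ↦ ∑ coord_j(c) g_j` is a bounded operator `T : X_d → X` with `T e_j = g_j` and `‖T‖ ≤ D`.
The functional `f* ∘ T` then represents `{[g_j, f]}` with norm at most `D ‖f‖`.
-/

open Finset

lemma CompatSIP.dual_apply {X : Type*} [NormedAddCommGroup X] [NormedSpace ℂ X]
    (S : CompatSIP X) (f g : X) : S.dual f g = S.sip g f :=
  rfl

lemma CompatSIP.norm_dual_le {X : Type*} [NormedAddCommGroup X] [NormedSpace ℂ X]
    (S : CompatSIP X) (f : X) : ‖S.dual f‖ ≤ ‖f‖ :=
  LinearMap.mkContinuous_norm_le _ (norm_nonneg f) _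

lemma norm_le_of_norm_sub_le {X : Type*} [SeminormedAddCommGroup X] {x y : X}
    {t α β γ B : ℝ} (hα : 0 ≤ α) (hβ : β < 1) (hx : ‖x‖ ≤ B * t)
    (hyx : ‖y - x‖ ≤ α * ‖x‖ + β * ‖y‖ + γ * t) :
    ‖y‖ ≤ ((1 + α) * B + γ) / (1 - β) * t := by
  have hy : ‖y‖ ≤ ‖x‖ + ‖y - x‖ := norm_le_norm_add_norm_sub' y x
  rw [div_mul_eq_mul_div, le_div_iff₀ (by linarith)]
  nlinarith

section SchauderBasis

variable {E F : Type*} [NormedAddCommGroup E] [NormedSpace ℂ E]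
  [NormedAddCommGroup F] [NormedSpace ℂ F]
  {e : ℕ → E} {coord : ℕ → StrongDual ℂ E} {g : ℕ → F} {D : ℝ}

lemma dist_sum_range_smul_le
    (hg : ∀ (s : Finset ℕ) (c : ℕ → ℂ), ‖∑ j ∈ s, c j • g j‖ ≤ D * ‖∑ j ∈ s, c j • e j‖)
    (c : ℕ → ℂ) (m n : ℕ) :
    dist (∑ j ∈ range m, c j • g j) (∑ j ∈ range n, c j • g j) ≤
      D * dist (∑ j ∈ range m, c j • e j) (∑ j ∈ range n, c j • e j) := by
  wlog hmn : m ≤ n generalizing m n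
  · rw [dist_comm, dist_comm (∑ j ∈ range m, c j • e j)]
    exact this n m (le_of_not_ge hmn)
  rw [dist_eq_norm', dist_eq_norm', ← sum_Ico_eq_sub _ hmn, ← sum_Ico_eq_sub _ hmn]
  exact hg _ _

lemma cauchySeq_sum_range_smul_of_norm_sum_le
    (hg : ∀ (s : Finset ℕ) (c : ℕ → ℂ), ‖∑ j ∈ s, c j • g j‖ ≤ D * ‖∑ j ∈ s, c j • e j‖)
    {c : ℕ → ℂ} (he : CauchySeq fun n => ∑ j ∈ range n, c j • e j) :
    CauchySeq fun n => ∑ j ∈ range n, c j • g j := by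
  rw [cauchySeq_iff_tendsto_dist_atTop_0] at he ⊢
  have hlim := he.const_mul D
  rw [mul_zero] at hlim
  exact squeeze_zero (fun _ => dist_nonneg) (fun p => dist_sum_range_smul_le hg c p.1 p.2) hlim

lemma sumsTo_coord_basis_smul (hco : ∀ i j, coord i (e j) = if i = j then (1 : ℂ) else 0)
    (j : ℕ) : SumsTo (fun i => coord i (e j) • g i) (g j) := by
  simpa [SumsTo, hco, ite_smul] using (hasSum_ite_eq j (g j)).tendsto_sum_nat

theorem exists_synthesis_of_norm_sum_le [CompleteSpace F]
    (hco : ∀ i j, coord i (e j) = if i = j then (1 : ℂ) else 0)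
    (hbasis : ∀ c : E, SumsTo (fun j => coord j c • e j) c) (hD : 0 ≤ D)
    (hg : ∀ (s : Finset ℕ) (c : ℕ → ℂ), ‖∑ j ∈ s, c j • g j‖ ≤ D * ‖∑ j ∈ s, c j • e j‖) :
    ∃ T : E →L[ℂ] F, (∀ c, SumsTo (fun j => coord j c • g j) (T c)) ∧
      (∀ j, T (e j) = g j) ∧ ‖T‖ ≤ D := by
  have hconv (c : E) : ∃ x, SumsTo (fun j => coord j c • g j) x :=
    cauchySeq_tendsto_of_complete
      (cauchySeq_sum_range_smul_of_norm_sum_le hg (hbasis c).cauchySeq)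
  choose T₀ hT₀ using hconv
  let partialSum (n : ℕ) : E →ₗ[ℂ] F := ∑ j ∈ range n, ((coord j).smulRight (g j) : E →ₗ[ℂ] F)
  have hpartial : Tendsto (fun n c => partialSum n c) atTop (𝓝 T₀) :=
    tendsto_pi_nhds.2 fun c => by simpa [partialSum, SumsTo] using hT₀ c
  have hT₀_le (c : E) : ‖T₀ c‖ ≤ D * ‖c‖ :=
    le_of_tendsto_of_tendsto' (hT₀ c).norm ((hbasis c).norm.const_mul D)
      fun n => hg (range n) fun j => coord j c
  let T := (linearMapOfTendsto T₀ partialSum hpartial).mkContinuous D hT₀_le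
  exact ⟨T, hT₀, fun j => tendsto_nhds_unique (hT₀ (e j)) (sumsTo_coord_basis_smul hco j),
    LinearMap.mkContinuous_norm_le _ hD _⟩

end SchauderBasis

lemma norm_sum_smul_le_of_perturbation {E F : Type*} [NormedAddCommGroup E] [NormedSpace ℂ E]
    [NormedAddCommGroup F] [NormedSpace ℂ F] {e : ℕ → E} {f g : ℕ → F}
    (U : E →L[ℂ] F) (hU : ∀ j, U (e j) = f j) {α β γ B : ℝ} (hUB : ‖U‖ ≤ B)
    (hα : 0 ≤ α) (hβ : β < 1)
    (hpert : ∀ (s : Finset ℕ) (c : ℕ → ℂ),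
      ‖∑ j ∈ s, c j • (g j - f j)‖ ≤
        α * ‖∑ j ∈ s, c j • f j‖ + β * ‖∑ j ∈ s, c j • g j‖ + γ * ‖∑ j ∈ s, c j • e j‖)
    (s : Finset ℕ) (c : ℕ → ℂ) :
    ‖∑ j ∈ s, c j • g j‖ ≤ ((1 + α) * B + γ) / (1 - β) * ‖∑ j ∈ s, c j • e j‖ := by
  have hsynth : ∑ j ∈ s, c j • f j = U (∑ j ∈ s, c j • e j) := by simp [hU]
  refine norm_le_of_norm_sub_le hα hβ ?_ ?_ (x := ∑ j ∈ s, c j • f j)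
  · rw [hsynth]
    exact U.le_of_opNorm_le hUB _
  · simpa [← sum_sub_distrib, smul_sub] using hpert s c

theorem perturbation_Bessel_general {X Xd : Type*}
    [NormedAddCommGroup X] [NormedSpace ℂ X] [CompleteSpace X]
    [NormedAddCommGroup Xd] [NormedSpace ℂ Xd]
    (S : CompatSIP X)
    (e : ℕ → Xd) (coord : ℕ → StrongDual ℂ Xd)
    (hco : ∀ i j, coord i (e j) = if i = j then (1 : ℂ) else 0)
    (hbasis : ∀ c : Xd, SumsTo (fun j => coord j c • e j) c)
    (fj gj : ℕ → X)
    -- synthesis operator of `{f_j}`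
    (U : Xd →L[ℂ] X) (hU : ∀ j, U (e j) = fj j)
    (B : ℝ) (hB : 0 < B) (hUnorm : ‖U‖ ≤ B)
    -- perturbation condition on finite sequences
    (α β γ : ℝ) (hα : 0 ≤ α) (hγ : 0 ≤ γ)
    (hpert : ∀ (s : Finset ℕ) (c : ℕ → ℂ),
      ‖∑ j ∈ s, c j • (gj j - fj j)‖ ≤
        α * ‖∑ j ∈ s, c j • fj j‖ + β * ‖∑ j ∈ s, c j • gj j‖ +
          γ * ‖∑ j ∈ s, c j • e j‖)
    (hβ1 : β < 1) :
    (∀ c : Xd, ∃ s : X, SumsTo (fun j => coord j c • gj j) s) ∧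
    (∀ f : X, ∃ G : StrongDual ℂ Xd,
      (∀ j, G (e j) = S.sip (gj j) f) ∧
      ‖G‖ ≤ (((1 + α) * B + γ) / (1 - β)) * ‖f‖) := by
  obtain ⟨T, hT, hTe, hTD⟩ := exists_synthesis_of_norm_sum_le hco hbasis
    (div_nonneg (by positivity) (by linarith))
    (norm_sum_smul_le_of_perturbation U hU hUnorm hα hβ1 hpert)
  refine ⟨fun c => ⟨T c, hT c⟩, fun f => ⟨(S.dual f).comp T, fun j => ?_, ?_⟩⟩
  · rw [ContinuousLinearMap.comp_apply, hTe, S.dual_apply]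
  · calc ‖(S.dual f).comp T‖ ≤ ‖S.dual f‖ * ‖T‖ := (S.dual f).opNorm_comp_le T
      _ ≤ ‖f‖ * (((1 + α) * B + γ) / (1 - β)) :=
        mul_le_mul (S.norm_dual_le f) hTD (norm_nonneg _) (norm_nonneg _)
      _ = _ := mul_comm _ _

/-- Paley–Wiener-type perturbation of an `X_d^*`-`K`-frame: under the perturbation
condition, `Σ_j c_j g_j` converges for every `c ∈ X_d` and `{g_j}` is an
`X_d^*`-Bessel sequence with bound `((1+α)B + γ)/(1−β)`. -/
theorem perturbation_Bessel {X Xd : Type*}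
    [NormedAddCommGroup X] [NormedSpace ℂ X] [CompleteSpace X]
    [StrictConvexSpace ℝ X] [TopologicalSpace.SeparableSpace X]
    [NormedAddCommGroup Xd] [NormedSpace ℂ Xd] [CompleteSpace Xd]
    [UniformConvexSpace Xd]
    (S : CompatSIP X)
    (e : ℕ → Xd) (coord : ℕ → StrongDual ℂ Xd)
    (hco : ∀ i j, coord i (e j) = if i = j then (1 : ℂ) else 0)
    (hbasis : ∀ c : Xd, SumsTo (fun j => coord j c • e j) c)
    (fj gj : ℕ → X) (K : X →L[ℂ] X)
    -- pseudo-inverse of `K` and duality mapping on `X_d^*` with its bound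
    (Kd : X →L[ℂ] X) (hKd : ∀ g ∈ Set.range K, K (Kd g) = g)
    (Φ : StrongDual ℂ Xd → Xd) (CΦ : ℝ) (hCΦ : 0 < CΦ)
    (hΦ : ∀ F : StrongDual ℂ Xd, ‖Φ F‖ ≤ CΦ * ‖F‖)
    -- synthesis operator of `{f_j}`
    (U : Xd →L[ℂ] X) (hU : ∀ j, U (e j) = fj j)
    -- `{f_j}` is an `X_d^*`-`K`-frame with bounds `A, B`
    (A B : ℝ) (hA : 0 < A) (hB : 0 < B) (hUnorm : ‖U‖ ≤ B)
    (hframe : ∀ f : X, ∃ F : StrongDual ℂ Xd,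
      (∀ j, F (e j) = S.sip (fj j) f) ∧
      A * ‖opDual K (S.dual f)‖ ≤ ‖F‖ ∧ ‖F‖ ≤ B * ‖f‖)
    -- perturbation condition on finite sequences
    (α β γ : ℝ) (hα : 0 ≤ α) (hβ : 0 ≤ β) (hγ : 0 ≤ γ)
    (hpert : ∀ (s : Finset ℕ) (c : ℕ → ℂ),
      ‖∑ j ∈ s, c j • (gj j - fj j)‖ ≤
        α * ‖∑ j ∈ s, c j • fj j‖ + β * ‖∑ j ∈ s, c j • gj j‖ +
          γ * ‖∑ j ∈ s, c j • e j‖)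
    (hβ1 : β < 1) (hsmall : α + γ * A⁻¹ * ‖Kd‖ * CΦ < 1) :
    (∀ c : Xd, ∃ s : X, SumsTo (fun j => coord j c • gj j) s) ∧
    (∀ f : X, ∃ G : StrongDual ℂ Xd,
      (∀ j, G (e j) = S.sip (gj j) f) ∧
      ‖G‖ ≤ (((1 + α) * B + γ) / (1 - β)) * ‖f‖) :=
  perturbation_Bessel_general S e coord hco hbasis fj gj U hU B hB hUnorm α β γ hα hγ hpert hβ1
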